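/- For any diagram D with no ghost cells, the ghost Kohnert poset P_G(D) is a join-semilattice: any two elements of GKD(D) have a least upper bound. -/
import Mathlib


/-- A diagram: finitely many regular cells and ghost cells in ℕ × ℕ. -/
structure Diagram where
  cells : Finset (ℕ × ℕ)
  ghosts : Finset (ℕ × ℕ)
  disj : Disjoint cells ghosts

namespace Diagram

/-- A position is occupied if it holds a regular or a ghost cell. -/
def Occupied (D : Diagram) (p : ℕ × ℕ) : Prop := p ∈ D.cells ∨ p ∈ D.ghosts

/-- `MoveSpec D r c r' D'`: the (nontrivial) ghost move at row `r` of `D` moves the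
rightmost cell `(r,c)` (a regular cell) down to the highest empty position `(r',c)`
below in its column, with no intervening ghost cell, leaving a ghost cell at `(r,c)`;
the result is `D'`. -/
def MoveSpec (D : Diagram) (r c r' : ℕ) (D' : Diagram) : Prop :=
  (r, c) ∈ D.cells ∧
  (∀ c', c < c' → ¬ D.Occupied (r, c')) ∧
  r' < r ∧ ¬ D.Occupied (r', c) ∧
  (∀ r'', r' < r'' → r'' < r → (r'', c) ∈ D.cells) ∧
  D'.cells = insert (r', c) (D.cells.erase (r, c)) ∧
  D'.ghosts = insert (r, c) D.ghosts

/-- `D'` is obtained from `D` by a single nontrivial ghost move. -/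
def Move (D D' : Diagram) : Prop := ∃ r c r', MoveSpec D r c r' D'

/-- `D'` is reachable from `D` by a (possibly empty) sequence of ghost moves. -/
def Reaches (D D' : Diagram) : Prop := Relation.ReflTransGen Move D D'

/-- The set of diagrams obtainable from `D` by sequences of ghost moves. -/
def GKD (D : Diagram) : Set Diagram := {T | D.Reaches T}

/-- The order of the ghost Kohnert poset: `dle T' T` means `T' ⪯ T`. -/
def dle (T' T : Diagram) : Prop := T.Reaches T'

/-- Strict order: `T' ≺ T`. -/
def dlt (T' T : Diagram) : Prop := dle T' T ∧ T' ≠ T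

/-- `CoveredBy T' T`: `T` covers `T'` in the ghost Kohnert poset. -/
def CoveredBy (T' T : Diagram) : Prop :=
  dlt T' T ∧ ∀ U, dlt T' U → dlt U T → False

/-- `(r,c)` is a free cell of `D`: it is the rightmost cell of row `r` and some
position strictly below it in column `c` is empty. -/
def Free (D : Diagram) (r c : ℕ) : Prop :=
  (r, c) ∈ D.cells ∧ (∀ c', c < c' → ¬ D.Occupied (r, c')) ∧
  ∃ r' < r, ¬ D.Occupied (r', c)

end Diagram

open Diagram

namespace GhostAux

lemma diagram_eq {A B : Diagram} (hc : A.cells = B.cells) (hg : A.ghosts = B.ghosts) :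
    A = B := by cases A; cases B; simp_all

lemma cell_not_ghost {V : Diagram} {p : ℕ × ℕ} (h : p ∈ V.cells) (h' : p ∈ V.ghosts) :
    False := Finset.disjoint_left.mp V.disj h h'

lemma occ_iff {V : Diagram} {p : ℕ × ℕ} :
    V.Occupied p ↔ p ∈ V.cells ∪ V.ghosts := by
  simp [Diagram.Occupied, Finset.mem_union]

/-- After a move, occupancy = old occupancy plus the landing square. -/
lemma occ_move {V V' : Diagram} {ρ γ τ : ℕ} (h : MoveSpec V ρ γ τ V') (p : ℕ × ℕ) :
    V'.Occupied p ↔ p = (τ, γ) ∨ V.Occupied p := by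
  obtain ⟨h1, h2, h3, h4, h5, h6, h7⟩ := h
  unfold Diagram.Occupied
  rw [h6, h7]
  simp only [Finset.mem_insert, Finset.mem_erase]
  constructor
  · rintro (⟨rfl | ⟨hne, hc⟩⟩ | ⟨rfl | hg⟩)
    · exact Or.inl rfl
    · exact Or.inr (Or.inl hc)
    · exact Or.inr (Or.inl h1)
    · exact Or.inr (Or.inr hg)
  · rintro (rfl | hc | hg)
    · exact Or.inl (Or.inl rfl)
    · by_cases he : p = (ρ, γ)
      · exact Or.inr (Or.inl he)
      · exact Or.inl (Or.inr ⟨he, hc⟩)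
    · exact Or.inr (Or.inr hg)

lemma occ_mono_move {V V' : Diagram} (h : Move V V') {p : ℕ × ℕ} (hp : V.Occupied p) :
    V'.Occupied p := by
  obtain ⟨ρ, γ, τ, hs⟩ := h
  exact (occ_move hs p).mpr (Or.inr hp)

lemma occ_mono {V T : Diagram} (h : V.Reaches T) {p : ℕ × ℕ} (hp : V.Occupied p) :
    T.Occupied p := by
  induction h with
  | refl => exact hp
  | tail _ hmv ih => exact occ_mono_move hmv ih

lemma ghosts_mono_move {V V' : Diagram} (h : Move V V') : V.ghosts ⊆ V'.ghosts := by
  obtain ⟨ρ, γ, τ, _, _, _, _, _, _, h7⟩ := h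
  rw [h7]; exact Finset.subset_insert _ _

lemma ghosts_mono {V T : Diagram} (h : V.Reaches T) : V.ghosts ⊆ T.ghosts := by
  induction h with
  | refl => exact Finset.Subset.refl _
  | tail _ hmv ih => exact ih.trans (ghosts_mono_move hmv)

/-- uniqueness of landing row, and of resulting diagram. -/
lemma landing_unique {V T T' : Diagram} {r c s s' : ℕ}
    (h : MoveSpec V r c s T) (h' : MoveSpec V r c s' T') : s = s' ∧ T = T' := by
  obtain ⟨h1, h2, h3, h4, h5, h6, h7⟩ := h
  obtain ⟨g1, g2, g3, g4, g5, g6, g7⟩ := h'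
  have hss : s = s' := by
    rcases Nat.lt_trichotomy s s' with hlt | he | hgt
    · exact absurd (Or.inl (h5 s' hlt g3)) g4
    · exact he
    · exact absurd (Or.inl (g5 s hgt h3)) h4
  subst hss
  exact ⟨rfl, diagram_eq (h6.trans g6.symm) (h7.trans g7.symm)⟩

/-- two moves from the same row have the same column. -/
lemma col_unique {V T T' : Diagram} {r c c' s s' : ℕ}
    (h : MoveSpec V r c s T) (h' : MoveSpec V r c' s' T') : c = c' := by
  rcases Nat.lt_trichotomy c c' with hlt | he | hgt
  · exact absurd (Or.inl h'.1) (h.2.1 c' hlt)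
  · exact he
  · exact absurd (Or.inl h.1) (h'.2.1 c hgt)

/-- length-indexed reachability -/
inductive ReachN : Diagram → Diagram → ℕ → Prop
  | refl (V : Diagram) : ReachN V V 0
  | head {S T U : Diagram} {n : ℕ} : Move S T → ReachN T U n → ReachN S U (n + 1)

lemma reachN_toReaches {V T : Diagram} {n : ℕ} (h : ReachN V T n) : V.Reaches T := by
  induction h with
  | refl => exact Relation.ReflTransGen.refl
  | head hmv _ ih => exact Relation.ReflTransGen.head hmv ih

lemma reaches_toN {V T : Diagram} (h : V.Reaches T) :
    ∃ n, ReachN V T n ∧ T.ghosts.card = V.ghosts.card + n := by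
  induction h using Relation.ReflTransGen.head_induction_on with
  | refl => exact ⟨0, ReachN.refl _, rfl⟩
  | head hmv _ ih =>
    obtain ⟨n, hn, hc⟩ := ih
    refine ⟨n + 1, ReachN.head hmv hn, ?_⟩
    obtain ⟨ρ, γ, τ, hs⟩ := hmv
    have : (ρ, γ) ∉ _root_.Diagram.ghosts _ := fun hg => cell_not_ghost hs.1 hg
    rw [hc, hs.2.2.2.2.2.2, Finset.card_insert_of_notMem this]
    omega

lemma reach_ghost_eq {J m : Diagram} (h : J.Reaches m) (hg : m.ghosts ⊆ J.ghosts) :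
    J = m := by
  induction h using Relation.ReflTransGen.head_induction_on with
  | refl => rfl
  | @head S T hmv hr _ =>
    obtain ⟨ρ, γ, τ, hs⟩ := hmv
    exfalso
    have h1 : (ρ, γ) ∈ T.ghosts := by rw [hs.2.2.2.2.2.2]; exact Finset.mem_insert_self _ _
    exact cell_not_ghost hs.1 (hg (ghosts_mono hr h1))


/-- O2: if a ghost at `(r,c₀)` is still pending (present in `w` but not yet in `V`),
then nothing to its right in row `r` is occupied in `V`. -/
lemma O2 {V w : Diagram} (hr : V.Reaches w) {r c₀ : ℕ}
    (hw : (r, c₀) ∈ w.ghosts) (hv : (r, c₀) ∉ V.ghosts) :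
    ∀ c', c₀ < c' → ¬ V.Occupied (r, c') := by
  induction hr using Relation.ReflTransGen.head_induction_on with
  | refl => exact absurd hw hv
  | @head S T hmv hrT ih =>
    obtain ⟨ρ, γ, τ, hs⟩ := hmv
    by_cases hcase : (ρ, γ) = (r, c₀)
    · have hρ : ρ = r := (Prod.ext_iff.mp hcase).1
      have hγ : γ = c₀ := (Prod.ext_iff.mp hcase).2
      subst hρ; subst hγ
      exact hs.2.1
    · intro c' hc' hocc
      have hvT : (r, c₀) ∉ T.ghosts := by
        rw [hs.2.2.2.2.2.2]
        simp only [Finset.mem_insert]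
        rintro (h | h)
        · exact hcase h.symm
        · exact hv h
      exact ih hvT c' hc' (occ_mono_move ⟨ρ, γ, τ, hs⟩ hocc)

/-- OBL: a pending ghost at `(a,c₀)` whose whole column below is blocked
(each position below `a` is occupied or has a ghost between it and `a`)
can never be created. -/
lemma OBL {V w : Diagram} (hr : V.Reaches w) {a c₀ : ℕ}
    (hw : (a, c₀) ∈ w.ghosts) (hv : (a, c₀) ∉ V.ghosts)
    (hblock : ∀ lam, lam < a → V.Occupied (lam, c₀) ∨
      ∃ x, lam < x ∧ x < a ∧ (x, c₀) ∈ V.ghosts) : False := by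
  induction hr using Relation.ReflTransGen.head_induction_on with
  | refl => exact hv hw
  | @head S T hmv hrT ih =>
    obtain ⟨ρ, γ, τ, hs⟩ := hmv
    by_cases hcase : (ρ, γ) = (a, c₀)
    · have hρ : ρ = a := (Prod.ext_iff.mp hcase).1
      have hγ : γ = c₀ := (Prod.ext_iff.mp hcase).2
      subst hρ; subst hγ
      rcases hblock τ hs.2.2.1 with hocc | ⟨x, hx1, hx2, hxg⟩
      · exact hs.2.2.2.1 hocc
      · exact cell_not_ghost (hs.2.2.2.2.1 x hx1 hx2) hxg
    · have hvT : (a, c₀) ∉ T.ghosts := by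
        rw [hs.2.2.2.2.2.2]
        simp only [Finset.mem_insert]
        rintro (h | h)
        · exact hcase h.symm
        · exact hv h
      refine ih hvT (fun lam hlam => ?_)
      rcases hblock lam hlam with hocc | ⟨x, hx1, hx2, hxg⟩
      · exact Or.inl (occ_mono_move ⟨ρ, γ, τ, hs⟩ hocc)
      · exact Or.inr ⟨x, hx1, hx2, ghosts_mono_move ⟨ρ, γ, τ, hs⟩ hxg⟩

/-- CROSSBLOCK: a pending ghost at `(β,c₀)` above an existing ghost `(a,c₀)` with
all positions strictly between occupied can never be created. -/
lemma crossBlock {V w : Diagram} (hr : V.Reaches w) {a β c₀ : ℕ}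
    (hga : (a, c₀) ∈ V.ghosts) (hw : (β, c₀) ∈ w.ghosts) (hv : (β, c₀) ∉ V.ghosts)
    (hab : a < β) (hocc : ∀ x, a < x → x < β → V.Occupied (x, c₀)) : False := by
  induction hr using Relation.ReflTransGen.head_induction_on with
  | refl => exact hv hw
  | @head S T hmv hrT ih =>
    obtain ⟨ρ, γ, τ, hs⟩ := hmv
    by_cases hcase : (ρ, γ) = (β, c₀)
    · have hρ : ρ = β := (Prod.ext_iff.mp hcase).1
      have hγ : γ = c₀ := (Prod.ext_iff.mp hcase).2
      subst hρ; subst hγ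
      rcases Nat.lt_trichotomy τ a with hlt | he | hgt
      · exact cell_not_ghost (hs.2.2.2.2.1 a hlt hab) hga
      · subst he; exact hs.2.2.2.1 (Or.inr hga)
      · exact hs.2.2.2.1 (hocc τ hgt hs.2.2.1)
    · have hvT : (β, c₀) ∉ T.ghosts := by
        rw [hs.2.2.2.2.2.2]
        simp only [Finset.mem_insert]
        rintro (h | h)
        · exact hcase h.symm
        · exact hv h
      exact ih (ghosts_mono_move ⟨ρ, γ, τ, hs⟩ hga) hvT
        (fun x h1 h2 => occ_mono_move ⟨ρ, γ, τ, hs⟩ (hocc x h1 h2))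


/-! ### The counting functional F -/

def Bfil (c a : ℕ) (X : Finset (ℕ × ℕ)) : Finset (ℕ × ℕ) :=
  X.filter (fun p => p.2 = c ∧ p.1 < a)

def occF (V : Diagram) : Finset (ℕ × ℕ) := V.cells ∪ V.ghosts

lemma mem_occF {V : Diagram} {p : ℕ × ℕ} : p ∈ occF V ↔ V.Occupied p := by
  simp [occF, Diagram.Occupied, Finset.mem_union]

def Fm (w : Diagram) (c a : ℕ) (V : Diagram) : ℤ :=
  ((Bfil c a (occF w)).card : ℤ) - (Bfil c a (occF V)).card
    - (Bfil c a (w.ghosts \ V.ghosts)).card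

lemma occF_move {V V' : Diagram} {ρ γ τ : ℕ} (h : MoveSpec V ρ γ τ V') :
    occF V' = insert (τ, γ) (occF V) := by
  ext p
  rw [mem_occF, Finset.mem_insert, mem_occF, occ_move h]

lemma Fstep {w V V' : Diagram} {c a ρ γ τ : ℕ} (h : MoveSpec V ρ γ τ V')
    (hg : (ρ, γ) ∈ w.ghosts) :
    Fm w c a V = Fm w c a V' + (if γ = c ∧ τ < a then 1 else 0)
      - (if γ = c ∧ ρ < a then 1 else 0) := by
  have hocc : (Bfil c a (occF V')).card
      = (Bfil c a (occF V)).card + (if γ = c ∧ τ < a then 1 else 0) := by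
    simp only [Bfil]
    rw [occF_move h, Finset.filter_insert]
    by_cases hc : γ = c ∧ τ < a
    · rw [if_pos hc, if_pos hc, Finset.card_insert_of_notMem]
      intro hmem
      have := Finset.mem_of_mem_filter _ hmem
      rw [mem_occF] at this
      exact h.2.2.2.1 this
    · rw [if_neg hc, if_neg hc, add_zero]
  have hsd : w.ghosts \ V'.ghosts = (w.ghosts \ V.ghosts).erase (ρ, γ) := by
    rw [h.2.2.2.2.2.2]
    ext p
    simp only [Finset.mem_sdiff, Finset.mem_insert, Finset.mem_erase]
    tauto
  have hpend : (Bfil c a (w.ghosts \ V'.ghosts)).card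
      = (Bfil c a (w.ghosts \ V.ghosts)).card - (if γ = c ∧ ρ < a then 1 else 0) ∧
      (if γ = c ∧ ρ < a then 1 else 0) ≤ (Bfil c a (w.ghosts \ V.ghosts)).card := by
    rw [hsd, Bfil, Finset.filter_erase]
    by_cases hc : γ = c ∧ ρ < a
    · have hmem : (ρ, γ) ∈ (w.ghosts \ V.ghosts).filter (fun p => p.2 = c ∧ p.1 < a) := by
        rw [Finset.mem_filter, Finset.mem_sdiff]
        exact ⟨⟨hg, fun hgv => cell_not_ghost h.1 hgv⟩, hc⟩
      rw [if_pos hc, Finset.card_erase_of_mem hmem]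
      exact ⟨rfl, Nat.one_le_iff_ne_zero.mpr (Finset.card_ne_zero_of_mem hmem)⟩
    · rw [if_neg hc, Finset.erase_eq_of_notMem, Nat.sub_zero]
      · exact ⟨rfl, Nat.zero_le _⟩
      · intro hmem
        exact hc (Finset.mem_filter.mp hmem).2
  unfold Fm
  rw [hocc, hpend.1]
  have := hpend.2
  push_cast [Nat.cast_sub this]
  ring

lemma Fm_self (w : Diagram) (c a : ℕ) : Fm w c a w = 0 := by
  unfold Fm
  rw [Finset.sdiff_self]
  simp [Bfil]

lemma Fm_nonneg {w V : Diagram} {c a : ℕ} (h : V.Reaches w) : 0 ≤ Fm w c a V := by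
  induction h using Relation.ReflTransGen.head_induction_on with
  | refl => rw [Fm_self]
  | @head S T hmv hrT ih =>
    obtain ⟨ρ, γ, τ, hs⟩ := hmv
    have hg : (ρ, γ) ∈ w.ghosts := by
      refine ghosts_mono hrT ?_
      rw [hs.2.2.2.2.2.2]; exact Finset.mem_insert_self _ _
    rw [Fstep hs hg]
    have h3 := hs.2.2.1
    split_ifs with h1 h2 h2 <;> omega

lemma Fm_ghost {w V : Diagram} {c a : ℕ} (h : V.Reaches w) (hga : (a, c) ∈ V.ghosts) :
    Fm w c a V = 0 := by
  induction h using Relation.ReflTransGen.head_induction_on with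
  | refl => rw [Fm_self]
  | @head S T hmv hrT ih =>
    obtain ⟨ρ, γ, τ, hs⟩ := hmv
    have hg : (ρ, γ) ∈ w.ghosts := by
      refine ghosts_mono hrT ?_
      rw [hs.2.2.2.2.2.2]; exact Finset.mem_insert_self _ _
    have ihv := ih (ghosts_mono_move ⟨ρ, γ, τ, hs⟩ hga)
    rw [Fstep hs hg, ihv]
    have hρa : ρ ≠ a ∨ γ ≠ c := by
      by_cases hh : ρ = a ∧ γ = c
      · exfalso; obtain ⟨rfl, rfl⟩ := hh; exact cell_not_ghost hs.1 hga
      · tauto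
    have hkey : γ = c → τ < a → ρ < a := by
      intro rfl' hτ
      by_contra hge
      push_neg at hge
      rcases Nat.lt_or_ge a ρ with hlt | hle
      · exact cell_not_ghost (hs.2.2.2.2.1 a hτ hlt) (by rwa [rfl'])
      · have : ρ = a := le_antisymm hle hge
        rcases hρa with h | h
        · exact h this
        · exact h rfl'
    have hkey2 : γ = c → ρ < a → τ < a := fun _ hρ => lt_trans hs.2.2.1 hρ
    have heq : (γ = c ∧ τ < a) ↔ (γ = c ∧ ρ < a) := by
      constructor
      · rintro ⟨rfl, hh⟩; exact ⟨rfl, hkey rfl hh⟩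
      · rintro ⟨rfl, hh⟩; exact ⟨rfl, hkey2 rfl hh⟩
    rw [if_congr heq rfl rfl]
    ring

lemma Fm_low {w V : Diagram} {c a : ℕ} (h : V.Reaches w) (hw : (a, c) ∈ w.ghosts)
    (hv : (a, c) ∉ V.ghosts) : 1 ≤ Fm w c a V := by
  induction h using Relation.ReflTransGen.head_induction_on with
  | refl => exact absurd hw hv
  | @head S T hmv hrT ih =>
    obtain ⟨ρ, γ, τ, hs⟩ := hmv
    have hg : (ρ, γ) ∈ w.ghosts := by
      refine ghosts_mono hrT ?_
      rw [hs.2.2.2.2.2.2]; exact Finset.mem_insert_self _ _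
    by_cases hcase : (ρ, γ) = (a, c)
    · have hρ : ρ = a := (Prod.ext_iff.mp hcase).1
      have hγ : γ = c := (Prod.ext_iff.mp hcase).2
      subst hρ; subst hγ
      rw [Fstep hs hg, if_pos ⟨rfl, hs.2.2.1⟩, if_neg (by simp)]
      have := Fm_nonneg (w := w) (c := γ) (a := ρ) hrT
      omega
    · have hvT : (a, c) ∉ T.ghosts := by
        rw [hs.2.2.2.2.2.2]
        simp only [Finset.mem_insert]
        rintro (h | h)
        · exact hcase h.symm
        · exact hv h
      have ihv := ih hvT
      rw [Fstep hs hg]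
      have h3 := hs.2.2.1
      split_ifs with h1 h2 h2 <;> omega


/-! ### The diamond (exchange) lemma -/

lemma dia {u u_A u₁ : Diagram} {a c sA ρ γ τ : ℕ}
    (s1 : MoveSpec u a c sA u_A) (s2 : MoveSpec u ρ γ τ u₁)
    (hne : (a, c) ≠ (ρ, γ))
    (h2 : ¬(τ = a ∧ c < γ))
    (hn2 : ¬(sA = ρ ∧ γ < c))
    (hcross : ¬(γ = c ∧ a < ρ ∧ τ < a))
    (hmid : ¬(γ = c ∧ sA < ρ ∧ ρ < a)) :
    ∃ W, MoveSpec u₁ a c sA W ∧ MoveSpec u_A ρ γ τ W := by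
  obtain ⟨a1, a2, a3, a4, a5, a6, a7⟩ := s1
  obtain ⟨b1, b2, b3, b4, b5, b6, b7⟩ := s2
  have hra : ρ ≠ a := by
    rintro rfl
    rcases Nat.lt_trichotomy γ c with hlt | he | hgt
    · exact b2 c hlt (Or.inl a1)
    · exact hne (by rw [he])
    · exact a2 γ hgt (Or.inl b1)
  have dtγ : (τ, γ) ≠ (a, c) := by
    intro he; exact b4 (he ▸ Or.inl a1)
  have dsρ : (sA, c) ≠ (ρ, γ) := by
    intro he; exact a4 (he ▸ Or.inl b1)
  have dst : (sA, c) ≠ (τ, γ) := by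
    intro he
    have hsτ : sA = τ := (Prod.ext_iff.mp he).1
    have hcγ : c = γ := (Prod.ext_iff.mp he).2
    rcases Nat.lt_trichotomy ρ a with hlt | heq | hgt
    · exact hmid ⟨hcγ.symm, by omega, hlt⟩
    · exact hra heq
    · exact hcross ⟨hcγ.symm, hgt, by omega⟩
  have midsafe : ∀ x, sA < x → x < a → (x, c) ≠ (ρ, γ) := by
    intro x hx1 hx2 he
    have hxρ : x = ρ := (Prod.ext_iff.mp he).1
    have hcγ : c = γ := (Prod.ext_iff.mp he).2
    exact hmid ⟨hcγ.symm, hxρ ▸ hx1, hxρ ▸ hx2⟩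
  have crosssafe : ∀ x, τ < x → x < ρ → (x, γ) ≠ (a, c) := by
    intro x hx1 hx2 he
    have hxa : x = a := (Prod.ext_iff.mp he).1
    have hγc : γ = c := (Prod.ext_iff.mp he).2
    exact hcross ⟨hγc, hxa ▸ hx2, hxa ▸ hx1⟩
  -- the result diagram
  set X : Finset (ℕ × ℕ) := (u.cells.erase (a, c)).erase (ρ, γ) with hX
  have Wdisj : Disjoint (insert (sA, c) (insert (τ, γ) X))
      (insert (a, c) (insert (ρ, γ) u.ghosts)) := by
    rw [Finset.disjoint_left]
    intro p hp hg
    simp only [Finset.mem_insert, hX, Finset.mem_erase] at hp hg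
    rcases hp with rfl | rfl | ⟨hpρ, hpa, hpc⟩
    · rcases hg with he | he | hg
      · exact absurd (Prod.ext_iff.mp he).1 (by omega)
      · exact dsρ he
      · exact a4 (Or.inr hg)
    · rcases hg with he | he | hg
      · exact dtγ he
      · exact absurd (Prod.ext_iff.mp he).1 (by omega)
      · exact b4 (Or.inr hg)
    · rcases hg with rfl | rfl | hg
      · exact hpa rfl
      · exact hpρ rfl
      · exact cell_not_ghost hpc hg
  refine ⟨⟨insert (sA, c) (insert (τ, γ) X), insert (a, c) (insert (ρ, γ) u.ghosts), Wdisj⟩,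
    ⟨?_, ?_, a3, ?_, ?_, ?_, ?_⟩, ⟨?_, ?_, b3, ?_, ?_, ?_, ?_⟩⟩
  · -- (a,c) ∈ u₁.cells
    rw [b6]
    exact Finset.mem_insert_of_mem (Finset.mem_erase.mpr ⟨hne, a1⟩)
  · -- rightmost in u₁
    intro c' hc' hocc
    rcases (occ_move ⟨b1, b2, b3, b4, b5, b6, b7⟩ _).mp hocc with he | ho
    · have h1 : a = τ := (Prod.ext_iff.mp he).1
      have h2' : c' = γ := (Prod.ext_iff.mp he).2
      exact h2 ⟨h1.symm, h2' ▸ hc'⟩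
    · exact a2 c' hc' ho
  · -- landing empty in u₁
    intro hocc
    rcases (occ_move ⟨b1, b2, b3, b4, b5, b6, b7⟩ _).mp hocc with he | ho
    · exact dst he
    · exact a4 ho
  · -- between cells in u₁
    intro x hx1 hx2
    rw [b6]
    by_cases he : (x, c) = (τ, γ)
    · rw [he]; exact Finset.mem_insert_self _ _
    · exact Finset.mem_insert_of_mem
        (Finset.mem_erase.mpr ⟨midsafe x hx1 hx2, a5 x hx1 hx2⟩)
  · -- cells equation for move from u₁
    show insert (sA, c) (insert (τ, γ) X) = _
    rw [b6]
    ext p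
    simp only [Finset.mem_insert, Finset.mem_erase, hX]
    constructor
    · rintro (rfl | rfl | ⟨hpρ, hpa, hpc⟩)
      · exact Or.inl rfl
      · exact Or.inr ⟨dtγ, Or.inl rfl⟩
      · exact Or.inr ⟨hpa, Or.inr ⟨hpρ, hpc⟩⟩
    · rintro (rfl | ⟨hpa, rfl | ⟨hpρ, hpc⟩⟩)
      · exact Or.inl rfl
      · exact Or.inr (Or.inl rfl)
      · exact Or.inr (Or.inr ⟨hpρ, hpa, hpc⟩)
  · -- ghosts equation for move from u₁
    rw [b7]
  · -- (ρ,γ) ∈ u_A.cells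
    rw [a6]
    exact Finset.mem_insert_of_mem (Finset.mem_erase.mpr ⟨Ne.symm hne, b1⟩)
  · -- rightmost in u_A
    intro γ' hγ' hocc
    rcases (occ_move ⟨a1, a2, a3, a4, a5, a6, a7⟩ _).mp hocc with he | ho
    · have h1 : ρ = sA := (Prod.ext_iff.mp he).1
      have h2' : γ' = c := (Prod.ext_iff.mp he).2
      exact hn2 ⟨h1.symm, h2' ▸ hγ'⟩
    · exact b2 γ' hγ' ho
  · -- landing empty in u_A
    intro hocc
    rcases (occ_move ⟨a1, a2, a3, a4, a5, a6, a7⟩ _).mp hocc with he | ho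
    · exact dst he.symm
    · exact b4 ho
  · -- between cells in u_A
    intro x hx1 hx2
    rw [a6]
    by_cases he : (x, γ) = (sA, c)
    · rw [he]; exact Finset.mem_insert_self _ _
    · exact Finset.mem_insert_of_mem
        (Finset.mem_erase.mpr ⟨crosssafe x hx1 hx2, b5 x hx1 hx2⟩)
  · -- cells equation for move from u_A
    show insert (sA, c) (insert (τ, γ) X) = _
    rw [a6]
    ext p
    simp only [Finset.mem_insert, Finset.mem_erase, hX]
    constructor
    · rintro (rfl | rfl | ⟨hpρ, hpa, hpc⟩)
      · exact Or.inr ⟨dsρ, Or.inl rfl⟩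
      · exact Or.inl rfl
      · exact Or.inr ⟨hpρ, Or.inr ⟨hpa, hpc⟩⟩
    · rintro (rfl | ⟨hpρ, rfl | ⟨hpa, hpc⟩⟩)
      · exact Or.inr (Or.inl rfl)
      · exact Or.inl rfl
      · exact Or.inr (Or.inr ⟨hpρ, hpa, hpc⟩)
  · -- ghosts equation for move from u_A
    show insert (a, c) (insert (ρ, γ) u.ghosts) = _
    rw [a7, Finset.insert_comm]


/-! ### Promotion: a pending move certified from the side stays performable first -/

lemma prom {w X : Diagram} {a c sA : ℕ}
    (hXw : X.Reaches w) (hXc : (sA, c) ∈ X.cells) (hgw : (a, c) ∈ w.ghosts) :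
    ∀ n u u_A, ReachN u w n → MoveSpec u a c sA u_A →
      Fm w c a u = 1 → X.ghosts ⊆ insert (a, c) u.ghosts → u_A.Reaches w := by
  intro n
  induction n with
  | zero =>
    intro u u_A hpath hspec _ _
    cases hpath
    exact absurd hgw (fun h => cell_not_ghost hspec.1 h)
  | succ n ih =>
    intro u u_A hpath hspec hF hGX
    obtain ⟨u₁, hmv, hrest⟩ : ∃ T, Move u T ∧ ReachN T w n := by
      cases hpath with
      | head hmv hrest => exact ⟨_, hmv, hrest⟩
    obtain ⟨ρ, γ, τ, hs2⟩ := hmv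
    have hu₁w : u₁.Reaches w := reachN_toReaches hrest
    by_cases hcase : (ρ, γ) = (a, c)
    · have hρ : ρ = a := (Prod.ext_iff.mp hcase).1
      have hγ : γ = c := (Prod.ext_iff.mp hcase).2
      subst hρ; subst hγ
      obtain ⟨-, hTeq⟩ := landing_unique hs2 hspec
      exact hTeq ▸ hu₁w
    · have hne' : (a, c) ≠ (ρ, γ) := fun h => hcase h.symm
      have hρw : (ρ, γ) ∈ w.ghosts := by
        refine ghosts_mono hu₁w ?_
        rw [hs2.2.2.2.2.2.2]; exact Finset.mem_insert_self _ _
      have hacu₁ : (a, c) ∈ u₁.cells := by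
        rw [hs2.2.2.2.2.2.1]
        exact Finset.mem_insert_of_mem (Finset.mem_erase.mpr ⟨hne', hspec.1⟩)
      have hacgu₁ : (a, c) ∉ u₁.ghosts := fun h => cell_not_ghost hacu₁ h
      have hρgX : (ρ, γ) ∉ X.ghosts := by
        intro h
        rcases Finset.mem_insert.mp (hGX h) with h' | h'
        · exact hne' h'.symm
        · exact cell_not_ghost hs2.1 h'
      -- discharge the diamond side conditions
      have h2 : ¬(τ = a ∧ c < γ) := by
        rintro ⟨rfl, hlt⟩
        exact O2 hu₁w hgw hacgu₁ γ hlt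
          ((occ_move hs2 (τ, γ)).mpr (Or.inl rfl))
      have hn2 : ¬(sA = ρ ∧ γ < c) := by
        rintro ⟨rfl, hlt⟩
        exact O2 hXw hρw hρgX c hlt (Or.inl hXc)
      have hcross : ¬(γ = c ∧ a < ρ ∧ τ < a) := by
        rintro ⟨rfl, haρ, hτa⟩
        have hstep := Fstep (w := w) (c := γ) (a := a) hs2 hρw
        rw [if_pos ⟨rfl, hτa⟩, if_neg (by omega : ¬(γ = γ ∧ ρ < a))] at hstep
        have := Fm_low hu₁w hgw hacgu₁
        omega
      have hmid : ¬(γ = c ∧ sA < ρ ∧ ρ < a) := by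
        rintro ⟨rfl, h1', h2'⟩
        have hτs : τ = sA := by
          rcases Nat.lt_trichotomy τ sA with hlt | he | hgt
          · exact absurd (Or.inl (hs2.2.2.2.2.1 sA hlt h1')) hspec.2.2.2.1
          · exact he
          · exact absurd (Or.inl (hspec.2.2.2.2.1 τ hgt (lt_trans hs2.2.2.1 h2')))
              hs2.2.2.2.1
        refine OBL hu₁w hgw hacgu₁ (fun lam hlam => ?_)
        rcases Nat.lt_trichotomy lam ρ with hlt | he | hgt
        · exact Or.inr ⟨ρ, hlt, h2', by
            rw [hs2.2.2.2.2.2.2]; exact Finset.mem_insert_self _ _⟩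
        · subst he
          refine Or.inl (Or.inr ?_)
          rw [hs2.2.2.2.2.2.2]; exact Finset.mem_insert_self _ _
        · refine Or.inl (Or.inl ?_)
          rw [hs2.2.2.2.2.2.1]
          refine Finset.mem_insert_of_mem (Finset.mem_erase.mpr ⟨?_, hspec.2.2.2.2.1 lam (lt_trans h1' hgt) hlam⟩)
          intro h
          exact absurd ((Prod.ext_iff.mp h).1) (by omega)
      obtain ⟨W, sW1, sW2⟩ := dia hspec hs2 hne' h2 hn2 hcross hmid
      -- F is preserved
      have hFu₁ : Fm w c a u₁ = 1 := by
        have hstep := Fstep (w := w) (c := c) (a := a) hs2 hρw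
        have hiff : (γ = c ∧ τ < a) ↔ (γ = c ∧ ρ < a) := by
          constructor
          · rintro ⟨rfl, hτ⟩
            refine ⟨rfl, ?_⟩
            rcases Nat.lt_trichotomy ρ a with h | h | h
            · exact h
            · exact absurd (Prod.ext_iff.mpr ⟨h, rfl⟩ : (ρ,γ) = (a,γ)) (fun hh => hne' hh.symm)
            · exfalso; exact hcross ⟨rfl, h, hτ⟩
          · rintro ⟨rfl, hρ⟩
            exact ⟨rfl, lt_trans hs2.2.2.1 hρ⟩
        rw [if_congr hiff rfl rfl] at hstep
        omega
      have hGX₁ : X.ghosts ⊆ insert (a, c) u₁.ghosts := by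
        refine hGX.trans (Finset.insert_subset_insert _ ?_)
        rw [hs2.2.2.2.2.2.2]; exact Finset.subset_insert _ _
      have hWw : W.Reaches w := ih u₁ W hrest sW1 hFu₁ hGX₁
      exact Relation.ReflTransGen.head ⟨ρ, γ, τ, sW2⟩ hWw


/-! ### The crux lemma: both first moves can be taken together -/

lemma crux {S X Y w : Diagram} {a c sA b cB sB : ℕ}
    (sa : MoveSpec S a c sA X) (sb : MoveSpec S b cB sB Y)
    (hne : (a, c) ≠ (b, cB)) (hXw : X.Reaches w) (hYw : Y.Reaches w) :
    ∃ Z, MoveSpec X b cB sB Z ∧ MoveSpec Y a c sA Z ∧ Z.Reaches w := by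
  have hagX : (a, c) ∈ X.ghosts := by
    rw [sa.2.2.2.2.2.2]; exact Finset.mem_insert_self _ _
  have hacw : (a, c) ∈ w.ghosts := ghosts_mono hXw hagX
  have hbw : (b, cB) ∈ w.ghosts := by
    refine ghosts_mono hYw ?_
    rw [sb.2.2.2.2.2.2]; exact Finset.mem_insert_self _ _
  have hbgX : (b, cB) ∉ X.ghosts := by
    rw [sa.2.2.2.2.2.2]
    simp only [Finset.mem_insert]
    rintro (h | h)
    · exact hne h.symm
    · exact cell_not_ghost sb.1 h
  have hagY : (a, c) ∉ Y.ghosts := by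
    rw [sb.2.2.2.2.2.2]
    simp only [Finset.mem_insert]
    rintro (h | h)
    · exact hne h
    · exact cell_not_ghost sa.1 h
  have hsAX : (sA, c) ∈ X.cells := by
    rw [sa.2.2.2.2.2.1]; exact Finset.mem_insert_self _ _
  -- diamond side conditions
  have h2 : ¬(sB = a ∧ c < cB) := by
    rintro ⟨rfl, hlt⟩
    exact O2 hYw hacw hagY cB hlt ((occ_move sb (sB, cB)).mpr (Or.inl rfl))
  have hn2 : ¬(sA = b ∧ cB < c) := by
    rintro ⟨rfl, hlt⟩
    exact O2 hXw hbw hbgX c hlt (Or.inl hsAX)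
  have hcrossX : cB = c → a < b → sB < a → False := by
    rintro rfl hab hsb
    refine crossBlock hXw hagX hbw hbgX hab (fun x hx1 hx2 => ?_)
    refine Or.inl ?_
    rw [sa.2.2.2.2.2.1]
    refine Finset.mem_insert_of_mem (Finset.mem_erase.mpr ⟨?_, sb.2.2.2.2.1 x (lt_trans hsb hx1) hx2⟩)
    intro h
    exact absurd (Prod.ext_iff.mp h).1 (by omega)
  have hcross : ¬(cB = c ∧ a < b ∧ sB < a) := by
    rintro ⟨h1', h2', h3'⟩; exact hcrossX h1' h2' h3'
  have hmid : ¬(cB = c ∧ sA < b ∧ b < a) := by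
    rintro ⟨rfl, h1', h2'⟩
    refine OBL hYw hacw hagY (fun lam hlam => ?_)
    rcases Nat.lt_trichotomy lam b with hlt | he | hgt
    · exact Or.inr ⟨b, hlt, h2', by
        rw [sb.2.2.2.2.2.2]; exact Finset.mem_insert_self _ _⟩
    · subst he
      refine Or.inl (Or.inr ?_)
      rw [sb.2.2.2.2.2.2]; exact Finset.mem_insert_self _ _
    · refine Or.inl (Or.inl ?_)
      rw [sb.2.2.2.2.2.1]
      refine Finset.mem_insert_of_mem (Finset.mem_erase.mpr ⟨?_, sa.2.2.2.2.1 lam (lt_trans h1' hgt) hlam⟩)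
      intro h
      exact absurd (Prod.ext_iff.mp h).1 (by omega)
  obtain ⟨Z, sZ1, sZ2⟩ := dia sa sb hne h2 hn2 hcross hmid
  -- F computations
  have hFX : Fm w c a X = 0 := Fm_ghost hXw hagX
  have hFS : Fm w c a S = 1 := by
    have hstep := Fstep (w := w) (c := c) (a := a) sa hacw
    rw [if_pos ⟨rfl, sa.2.2.1⟩, if_neg (by omega : ¬(c = c ∧ a < a))] at hstep
    omega
  have hFY : Fm w c a Y = 1 := by
    have hstep := Fstep (w := w) (c := c) (a := a) sb hbw
    have hiff : (cB = c ∧ sB < a) ↔ (cB = c ∧ b < a) := by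
      constructor
      · rintro ⟨rfl, hτ⟩
        refine ⟨rfl, ?_⟩
        rcases Nat.lt_trichotomy b a with h | h | h
        · exact h
        · exact absurd (Prod.ext_iff.mpr ⟨h.symm, rfl⟩ : (a, cB) = (b, cB)) hne
        · exact absurd (hcrossX rfl h hτ) not_false
      · rintro ⟨rfl, hρ⟩
        exact ⟨rfl, lt_trans sb.2.2.1 hρ⟩
    rw [if_congr hiff rfl rfl] at hstep
    omega
  obtain ⟨n, hn, -⟩ := reaches_toN hYw
  have hcert : X.ghosts ⊆ insert (a, c) Y.ghosts := by
    rw [sa.2.2.2.2.2.2, sb.2.2.2.2.2.2]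
    exact Finset.insert_subset_insert _ (Finset.subset_insert _ _)
  have hZw : Z.Reaches w := prom hXw hsAX hacw n Y Z hn sZ1 hFY hcert
  exact ⟨Z, sZ2, sZ1, hZw⟩


lemma reachN_card {V T : Diagram} {k : ℕ} (h : ReachN V T k) :
    T.ghosts.card = V.ghosts.card + k := by
  induction h with
  | refl => rfl
  | @head S T' U n hmv hrest ih =>
    obtain ⟨ρ, γ, τ, hs⟩ := hmv
    have hni : (ρ, γ) ∉ S.ghosts := fun hg => cell_not_ghost hs.1 hg
    rw [ih, hs.2.2.2.2.2.2, Finset.card_insert_of_notMem hni]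
    omega

/-- The pushout ("meet of histories") lemma. -/
lemma bundle : ∀ n S x y n₁ n₂, ReachN S x n₁ → ReachN S y n₂ → n₁ + n₂ ≤ n →
    (∃ w₀, x.Reaches w₀ ∧ y.Reaches w₀) →
    ∃ m, x.Reaches m ∧ y.Reaches m ∧ m.ghosts = x.ghosts ∪ y.ghosts ∧
      ∀ w, x.Reaches w → y.Reaches w → m.Reaches w := by
  intro n
  induction n using Nat.strong_induction_on with
  | _ n ih =>
  intro S x y n₁ n₂ hp hq hle hcd
  cases hp with
  | refl =>
    refine ⟨y, reachN_toReaches hq, Relation.ReflTransGen.refl, ?_, fun w _ h2 => h2⟩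
    exact (Finset.union_eq_right.mpr (ghosts_mono (reachN_toReaches hq))).symm
  | @head _ X' _ k₁ hmvA hrestA =>
    cases hq with
    | refl =>
      refine ⟨x, Relation.ReflTransGen.refl,
        reachN_toReaches (ReachN.head hmvA hrestA), ?_, fun w h1 _ => h1⟩
      exact (Finset.union_eq_left.mpr
        (ghosts_mono (reachN_toReaches (ReachN.head hmvA hrestA)))).symm
    | @head _ Y' _ k₂ hmvB hrestB =>
      obtain ⟨a, c, sA, sa⟩ := hmvA
      obtain ⟨b, cB, sB, sb⟩ := hmvB
      by_cases hpos : (a, c) = (b, cB)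
      · -- the two first moves coincide
        have ha : a = b := (Prod.ext_iff.mp hpos).1
        have hc : c = cB := (Prod.ext_iff.mp hpos).2
        subst ha; subst hc
        obtain ⟨-, hXY⟩ := landing_unique sa sb
        subst hXY
        exact ih (k₁ + k₂) (by omega) X' x y k₁ k₂ hrestA hrestB le_rfl hcd
      · obtain ⟨w₀, hxw₀, hyw₀⟩ := hcd
        have hX'x : X'.Reaches x := reachN_toReaches hrestA
        have hY'y : Y'.Reaches y := reachN_toReaches hrestB
        obtain ⟨Z, sZX, sZY, hZw₀⟩ := crux sa sb hpos (hX'x.trans hxw₀) (hY'y.trans hyw₀)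
        have hZuniv : ∀ w, X'.Reaches w → Y'.Reaches w → Z.Reaches w := by
          intro w h1 h2
          obtain ⟨Z', sZX', -, hZ'w⟩ := crux sa sb hpos h1 h2
          obtain ⟨-, hZZ'⟩ := landing_unique sZX sZX'
          exact hZZ' ▸ hZ'w
        -- ghost membership facts
        have hagX' : (a, c) ∈ X'.ghosts := by
          rw [sa.2.2.2.2.2.2]; exact Finset.mem_insert_self _ _
        have hbgY' : (b, cB) ∈ Y'.ghosts := by
          rw [sb.2.2.2.2.2.2]; exact Finset.mem_insert_self _ _
        have hagx : (a, c) ∈ x.ghosts := ghosts_mono hX'x hagX'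
        have hbgy : (b, cB) ∈ y.ghosts := ghosts_mono hY'y hbgY'
        have hSx : S.ghosts ⊆ x.ghosts :=
          (ghosts_mono_move ⟨a, c, sA, sa⟩).trans (ghosts_mono hX'x)
        have hSy : S.ghosts ⊆ y.ghosts :=
          (ghosts_mono_move ⟨b, cB, sB, sb⟩).trans (ghosts_mono hY'y)
        have hgZ : Z.ghosts = insert (b, cB) (insert (a, c) S.ghosts) := by
          rw [sZX.2.2.2.2.2.2, sa.2.2.2.2.2.2]
        have haS : (a, c) ∉ S.ghosts := fun h => cell_not_ghost sa.1 h
        have hbZ' : (b, cB) ∉ insert (a, c) S.ghosts := by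
          simp only [Finset.mem_insert]
          rintro (h | h)
          · exact hpos h.symm
          · exact cell_not_ghost sb.1 h
        have hcardZ : Z.ghosts.card = S.ghosts.card + 2 := by
          rw [hgZ, Finset.card_insert_of_notMem hbZ',
            Finset.card_insert_of_notMem haS]
        have hZsubxy : Z.ghosts ⊆ x.ghosts ∪ y.ghosts := by
          rw [hgZ]
          intro p hp
          rcases Finset.mem_insert.mp hp with rfl | hp
          · exact Finset.mem_union_right _ hbgy
          · rcases Finset.mem_insert.mp hp with rfl | hp
            · exact Finset.mem_union_left _ hagx
            · exact Finset.mem_union_left _ (hSx hp)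
        -- first recursive call, at X'
        obtain ⟨m₁, hxm₁, hZm₁, hg₁, univ₁⟩ :=
          ih (k₁ + 1) (by omega) X' x Z k₁ 1 hrestA
            (ReachN.head ⟨b, cB, sB, sZX⟩ (ReachN.refl Z)) (by omega)
            ⟨w₀, hxw₀, hZw₀⟩
        -- second recursive call, at Y'
        obtain ⟨m₂, hym₂, hZm₂, hg₂, univ₂⟩ :=
          ih (k₂ + 1) (by omega) Y' y Z k₂ 1 hrestB
            (ReachN.head ⟨a, c, sA, sZY⟩ (ReachN.refl Z)) (by omega)
            ⟨w₀, hyw₀, hZw₀⟩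
        -- length bookkeeping for the third call
        obtain ⟨l₁, hL₁, hcard₁⟩ := reaches_toN hZm₁
        obtain ⟨l₂, hL₂, hcard₂⟩ := reaches_toN hZm₂
        have hcx : x.ghosts.card = S.ghosts.card + (k₁ + 1) :=
          reachN_card (ReachN.head ⟨a, c, sA, sa⟩ hrestA)
        have hcy : y.ghosts.card = S.ghosts.card + (k₂ + 1) :=
          reachN_card (ReachN.head ⟨b, cB, sB, sb⟩ hrestB)
        have hl₁ : l₁ ≤ k₁ := by
          have hinter : S.ghosts.card + 1 ≤ (x.ghosts ∩ Z.ghosts).card := by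
            have hsub : insert (a, c) S.ghosts ⊆ x.ghosts ∩ Z.ghosts := by
              refine Finset.insert_subset (Finset.mem_inter.mpr ⟨hagx, ?_⟩) ?_
              · rw [hgZ]
                exact Finset.mem_insert_of_mem (Finset.mem_insert_self _ _)
              · intro p hp
                refine Finset.mem_inter.mpr ⟨hSx hp, ?_⟩
                rw [hgZ]
                exact Finset.mem_insert_of_mem (Finset.mem_insert_of_mem hp)
            calc S.ghosts.card + 1 = (insert (a, c) S.ghosts).card :=
                  (Finset.card_insert_of_notMem haS).symm
              _ ≤ _ := Finset.card_le_card hsub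
          have hu := Finset.card_union_add_card_inter x.ghosts Z.ghosts
          have hm₁c : m₁.ghosts.card = (x.ghosts ∪ Z.ghosts).card := by rw [hg₁]
          omega
        have hl₂ : l₂ ≤ k₂ := by
          have hinter : S.ghosts.card + 1 ≤ (y.ghosts ∩ Z.ghosts).card := by
            have hsub : insert (b, cB) S.ghosts ⊆ y.ghosts ∩ Z.ghosts := by
              refine Finset.insert_subset (Finset.mem_inter.mpr ⟨hbgy, ?_⟩) ?_
              · rw [hgZ]
                exact Finset.mem_insert_self _ _
              · intro p hp
                refine Finset.mem_inter.mpr ⟨hSy hp, ?_⟩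
                rw [hgZ]
                exact Finset.mem_insert_of_mem (Finset.mem_insert_of_mem hp)
            have hbS : (b, cB) ∉ S.ghosts := fun h => cell_not_ghost sb.1 h
            calc S.ghosts.card + 1 = (insert (b, cB) S.ghosts).card :=
                  (Finset.card_insert_of_notMem hbS).symm
              _ ≤ _ := Finset.card_le_card hsub
          have hu := Finset.card_union_add_card_inter y.ghosts Z.ghosts
          have hm₂c : m₂.ghosts.card = (y.ghosts ∪ Z.ghosts).card := by rw [hg₂]
          omega
        -- third recursive call, at Z
        obtain ⟨m₃, hm₁₃, hm₂₃, hg₃, univ₃⟩ :=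
          ih (l₁ + l₂) (by omega) Z m₁ m₂ l₁ l₂ hL₁ hL₂ le_rfl
            ⟨w₀, univ₁ w₀ hxw₀ hZw₀, univ₂ w₀ hyw₀ hZw₀⟩
        refine ⟨m₃, hxm₁.trans hm₁₃, hym₂.trans hm₂₃, ?_, ?_⟩
        · rw [hg₃, hg₁, hg₂]
          apply Finset.Subset.antisymm
          · refine Finset.union_subset (Finset.union_subset ?_ hZsubxy)
              (Finset.union_subset ?_ hZsubxy)
            · exact Finset.subset_union_left
            · exact Finset.subset_union_right
          · refine Finset.union_subset ?_ ?_
            · exact (Finset.subset_union_left (s₂ := Z.ghosts)).trans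
                Finset.subset_union_left
            · exact (Finset.subset_union_left (s₂ := Z.ghosts)).trans
                Finset.subset_union_right
        · intro w hxw hyw
          have hZw : Z.Reaches w := hZuniv w (hX'x.trans hxw) (hY'y.trans hyw)
          exact univ₃ w (univ₁ w hxw hZw) (univ₂ w hyw hZw)

end GhostAux

open GhostAux

/-- the ghost Kohnert poset is a join-semilattice. -/
theorem ghost_poset_join_semilattice (D : Diagram) (hD : D.ghosts = ∅) :
    ∀ D₁ ∈ D.GKD, ∀ D₂ ∈ D.GKD, ∃ J ∈ D.GKD,
      dle D₁ J ∧ dle D₂ J ∧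
      ∀ U ∈ D.GKD, dle D₁ U → dle D₂ U → dle J U := by
  intro D₁ h₁ D₂ h₂
  have h₁' : D.Reaches D₁ := h₁
  have h₂' : D.Reaches D₂ := h₂
  classical
  set T : Set ℕ :=
    {k | ∃ U : Diagram, (D.Reaches U ∧ U.Reaches D₁ ∧ U.Reaches D₂) ∧ U.ghosts.card = k}
    with hT
  have hne : T.Nonempty :=
    ⟨D.ghosts.card, D, ⟨Relation.ReflTransGen.refl, h₁', h₂'⟩, rfl⟩
  have hbdd : BddAbove T := by
    refine ⟨D₁.ghosts.card, fun k hk => ?_⟩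
    obtain ⟨U, hU, rfl⟩ := hk
    exact Finset.card_le_card (GhostAux.ghosts_mono hU.2.1)
  obtain ⟨J, hJ, hJcard⟩ := Nat.sSup_mem hne hbdd
  refine ⟨J, hJ.1, hJ.2.1, hJ.2.2, ?_⟩
  intro U hU hU₁ hU₂
  have hU' : D.Reaches U := hU
  have hU₁' : U.Reaches D₁ := hU₁
  have hU₂' : U.Reaches D₂ := hU₂
  obtain ⟨n₁, hp, -⟩ := GhostAux.reaches_toN hU'
  obtain ⟨n₂, hq, -⟩ := GhostAux.reaches_toN hJ.1
  obtain ⟨m, hUm, hJm, hgm, univ⟩ :=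
    GhostAux.bundle (n₁ + n₂) D U J n₁ n₂ hp hq le_rfl ⟨D₁, hU₁', hJ.2.1⟩
  have hm₁ : m.Reaches D₁ := univ D₁ hU₁' hJ.2.1
  have hm₂ : m.Reaches D₂ := univ D₂ hU₂' hJ.2.2
  have hmT : m.ghosts.card ∈ T := ⟨m, ⟨hU'.trans hUm, hm₁, hm₂⟩, rfl⟩
  have hcle : m.ghosts.card ≤ J.ghosts.card := hJcard ▸ le_csSup hbdd hmT
  have hsub : J.ghosts ⊆ m.ghosts := GhostAux.ghosts_mono hJm
  have hgeq : J.ghosts = m.ghosts := Finset.eq_of_subset_of_card_le hsub hcle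
  have hJm' : J = m := GhostAux.reach_ghost_eq hJm (hgeq ▸ Finset.Subset.refl _)
  show U.Reaches J
  rw [hJm']
  exact hUm
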